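/- Let H = F_3[R, r]/(relations from M_24 cohomology restricted to this subalgebra: R has degree 3, r has degree 4, R^2 = 0, Rr generates freely: H = F_3[r] ⊕ R·F_3[r]) with 3-differential D = P + ε·r where P(R) = Rr and P(r) = −r^2 (extended as a derivation), ε ∈ F_3. Then for ε = 1, the non-free part of H as an F_3[D]/(D^3)-module is span{1, r} (degrees 0→4); for ε = −1 it is span{R} (degree 3); for ε = 0 it is span{1} ⊕ span{R, Rr} (degrees 0 and 3→7). -/

import Mathlib

open Polynomial

/-- The 3-differential `D = P + ε·r` on `H = F₃[r] ⊕ R·F₃[r]` (deg r = 4, deg R = 3, R² = 0),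
where `P` is the derivation with `P(r) = −r²`, `P(R) = R r`.  We model `f(r) + R·g(r)` as the
pair `(f, g)`; then `D(f, g) = (ε X f − X² f', (1+ε) X g − X² g')`. -/
noncomputable def D17 (ε : ZMod 3) :
    (Polynomial (ZMod 3) × Polynomial (ZMod 3)) →ₗ[ZMod 3]
      (Polynomial (ZMod 3) × Polynomial (ZMod 3)) :=
  LinearMap.prodMap
    (ε • LinearMap.mulLeft (ZMod 3) X -
      (LinearMap.mulLeft (ZMod 3) (X ^ 2)).comp
        (derivative : Polynomial (ZMod 3) →ₗ[ZMod 3] Polynomial (ZMod 3)))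
    ((1 + ε) • LinearMap.mulLeft (ZMod 3) X -
      (LinearMap.mulLeft (ZMod 3) (X ^ 2)).comp
        (derivative : Polynomial (ZMod 3) →ₗ[ZMod 3] Polynomial (ZMod 3)))

/-- `W` is a `D`-invariant submodule which is a free `F₃[D]/(D³)`-module. -/
def IsFreeInv {V : Type*} [AddCommGroup V] [Module (ZMod 3) V]
    (D : V →ₗ[ZMod 3] V) (W : Submodule (ZMod 3) V) : Prop :=
  (∀ w ∈ W, D w ∈ W) ∧ ∀ w ∈ W, D w = 0 → ∃ u ∈ W, D (D u) = w

/-!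
Writing `f(r) + R g(r)` as `(f, g)`, the operator `D` acts on each summand as the weighted
shift `X ^ k ↦ (a - k) X ^ (k + 1)`, with `a = ε` on `F₃[r]` and `a = 1 + ε` on `R F₃[r]`.
Over `F₃` three consecutive weights `a - k, a - k - 1, a - k - 2` always contain a zero, so
`D³ = 0`. The weight vanishes exactly for `k ≡ a (mod 3)`, so the basis breaks into strings
`X ^ k → X ^ (k + 1) → X ^ (k + 2)` with `k ≡ a + 1`, which are free, together with the initial
segment `1, …, X ^ (t - 1)` for the least `t ≡ a + 1`, which is the non-free part
`degreeLT t`; its free complement is the space of multiples of `X ^ t`.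
-/

section ProdSubmodule

variable {R M M' : Type*} [Semiring R] [AddCommMonoid M] [Module R M] [AddCommMonoid M']
  [Module R M']

theorem Module.End.prod_mem_invtSubmodule_prodMap {f : Module.End R M} {g : Module.End R M'}
    {p : Submodule R M} {q : Submodule R M'} (hp : p ∈ f.invtSubmodule)
    (hq : q ∈ g.invtSubmodule) : p.prod q ∈ Module.End.invtSubmodule (f.prodMap g) :=
  fun _ hx => ⟨hp hx.1, hq hx.2⟩

theorem Submodule.isCompl_prod {p p' : Submodule R M} {q q' : Submodule R M'}
    (hp : IsCompl p p') (hq : IsCompl q q') : IsCompl (p.prod q) (p'.prod q') := by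
  rw [isCompl_iff, disjoint_iff, codisjoint_iff, prod_inf_prod, prod_sup_prod, hp.inf_eq_bot,
    hq.inf_eq_bot, hp.sup_eq_top, hq.sup_eq_top, prod_bot, prod_top]
  exact ⟨rfl, rfl⟩

theorem Submodule.span_image_inl (s : Set M) :
    span R (LinearMap.inl R M M' '' s) = (span R s).prod ⊥ := by
  rw [span_image, map_inl]

theorem Submodule.span_image_inr (s : Set M') :
    span R (LinearMap.inr R M M' '' s) = prod ⊥ (span R s) := by
  rw [span_image, map_inr]

end ProdSubmodule

namespace Polynomial

variable {R : Type*} [CommRing R]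

noncomputable def weightShift (a : R) : R[X] →ₗ[R] R[X] :=
  a • LinearMap.mulLeft R X - (LinearMap.mulLeft R (X ^ 2)).comp derivative

theorem weightShift_apply (a : R) (f : R[X]) :
    weightShift a f = a • (X * f) - X ^ 2 * derivative f :=
  rfl

@[simp]
theorem coeff_weightShift_zero (a : R) (f : R[X]) : (weightShift a f).coeff 0 = 0 := by
  simp [weightShift_apply, coeff_zero_eq_eval_zero]

@[simp]
theorem coeff_weightShift_succ (a : R) (f : R[X]) (k : ℕ) :
    (weightShift a f).coeff (k + 1) = (a - k) * f.coeff k := by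
  rcases k with _ | k
  · simp [weightShift_apply, pow_two, mul_assoc, coeff_X_mul, coeff_zero_eq_eval_zero]
  · rw [weightShift_apply, coeff_sub, coeff_smul, coeff_X_mul, show k + 1 + 1 = k + 2 by rfl,
      coeff_X_pow_mul, coeff_derivative, smul_eq_mul]
    push_cast
    ring

theorem coeff_eq_zero_of_weightShift_eq_zero [NoZeroDivisors R] {a : R} {f : R[X]}
    (hf : weightShift a f = 0) {k : ℕ} (hk : (k : R) ≠ a) : f.coeff k = 0 := by
  have h := congrArg (coeff · (k + 1)) hf
  simp only [coeff_weightShift_succ, coeff_zero] at h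
  exact (mul_eq_zero.1 h).resolve_left (sub_ne_zero.2 hk.symm)

variable (R) in
def vanishingBelow (t : ℕ) : Submodule R R[X] where
  carrier := {f | ∀ n < t, f.coeff n = 0}
  add_mem' hf hg n hn := by simp [hf n hn, hg n hn]
  zero_mem' _ _ := coeff_zero _
  smul_mem' c f hf n hn := by simp [hf n hn]

theorem isCompl_vanishingBelow_degreeLT (t : ℕ) :
    IsCompl (vanishingBelow R t) (degreeLT R t) := by
  constructor
  · rw [Submodule.disjoint_def]
    intro f hlow hdeg
    ext n
    rw [mem_degreeLT, degree_lt_iff_coeff_zero] at hdeg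
    exact (lt_or_ge n t).elim (hlow n) (hdeg n)
  · rw [codisjoint_iff, eq_top_iff]
    intro f _
    have hdeg : PowerSeries.trunc t (f : PowerSeries R) ∈ degreeLT R t :=
      mem_degreeLT.2 (PowerSeries.degree_trunc_lt _ t)
    have hlow : f - PowerSeries.trunc t (f : PowerSeries R) ∈ vanishingBelow R t := by
      intro n hn
      simp [PowerSeries.coeff_trunc, hn]
    simpa using Submodule.add_mem_sup hlow hdeg

theorem vanishingBelow_mem_invtSubmodule (a : R) (t : ℕ) :
    vanishingBelow R t ∈ Module.End.invtSubmodule (weightShift a) := by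
  intro f hf n hn
  rcases n with _ | k
  · exact coeff_weightShift_zero a f
  · simp [coeff_weightShift_succ, hf k (by omega)]

theorem degreeLT_mem_invtSubmodule {a : R} {t : ℕ} (ht : (t : R) = a + 1) :
    degreeLT R t ∈ Module.End.invtSubmodule (weightShift a) := by
  intro f hf
  rw [Submodule.mem_comap, mem_degreeLT, degree_lt_iff_coeff_zero] at *
  intro m hm
  rcases m with _ | k
  · exact coeff_weightShift_zero a f
  · rw [coeff_weightShift_succ]
    rcases eq_or_lt_of_le hm with rfl | hlt
    · rw [Nat.cast_succ, add_left_inj] at ht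
      rw [ht, sub_self, zero_mul]
    · rw [hf k (by omega), mul_zero]

theorem degreeLT_zero : degreeLT R 0 = ⊥ := by
  classical
  simp [degreeLT_eq_span_X_pow]

theorem degreeLT_one : degreeLT R 1 = Submodule.span R {1} := by
  classical
  simp [degreeLT_eq_span_X_pow]

theorem degreeLT_two : degreeLT R 2 = Submodule.span R {1, X} := by
  classical
  rw [degreeLT_eq_span_X_pow]
  simp [Finset.range_add_one, Set.pair_comm]

theorem span_inl_one : Submodule.span R {((1 : R[X]), (0 : R[X]))} = (degreeLT R 1).prod ⊥ := by
  rw [degreeLT_one, ← Submodule.span_image_inl, Set.image_singleton, LinearMap.inl_apply]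

theorem span_inl_one_X :
    Submodule.span R {((1 : R[X]), (0 : R[X])), (X, 0)} = (degreeLT R 2).prod ⊥ := by
  rw [degreeLT_two, ← Submodule.span_image_inl, Set.image_pair, LinearMap.inl_apply,
    LinearMap.inl_apply]

theorem span_inr_one : Submodule.span R {((0 : R[X]), (1 : R[X]))} = .prod ⊥ (degreeLT R 1) := by
  rw [degreeLT_one, ← Submodule.span_image_inr, Set.image_singleton, LinearMap.inr_apply]

theorem span_inr_one_X :
    Submodule.span R {((0 : R[X]), (1 : R[X])), (0, X)} = .prod ⊥ (degreeLT R 2) := by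
  rw [degreeLT_two, ← Submodule.span_image_inr, Set.image_pair, LinearMap.inr_apply,
    LinearMap.inr_apply]

theorem isCompl_vanishingBelow_prod_degreeLT_prod (t t' : ℕ) :
    IsCompl ((vanishingBelow R t).prod (vanishingBelow R t'))
      ((degreeLT R t).prod (degreeLT R t')) :=
  Submodule.isCompl_prod (isCompl_vanishingBelow_degreeLT t) (isCompl_vanishingBelow_degreeLT t')

theorem weightShift_cube (a : ZMod 3) (f : (ZMod 3)[X]) :
    weightShift a (weightShift a (weightShift a f)) = 0 := by
  ext k
  rcases k with _ | _ | _ | k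
  · simp
  · simp
  · simp
  · have h : ∀ x : ZMod 3, (x - 2) * ((x - 1) * x) = 0 := by decide
    simp only [coeff_weightShift_succ, coeff_zero]
    push_cast
    linear_combination h (a - k) * f.coeff k

theorem mem_vanishingBelow_add_two_of_weightShift_eq_zero {a : ZMod 3} {t : ℕ}
    (ht : (t : ZMod 3) = a + 1) {f : (ZMod 3)[X]} (hf : f ∈ vanishingBelow (ZMod 3) t)
    (hker : weightShift a f = 0) : f ∈ vanishingBelow (ZMod 3) (t + 2) := by
  intro n hn
  obtain hlt | ⟨i, hi, rfl⟩ : n < t ∨ ∃ i < 2, n = t + i :=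
    (lt_or_ge n t).imp_right fun h => ⟨n - t, by omega, by omega⟩
  · exact hf n hlt
  · apply coeff_eq_zero_of_weightShift_eq_zero hker
    have h : ∀ x : ZMod 3, x + 1 ≠ x ∧ x + 1 + 1 ≠ x := by decide
    interval_cases i <;> simp [ht, h]

theorem isFreeInv_weightShift {a : ZMod 3} {t : ℕ} (ht : (t : ZMod 3) = a + 1) :
    IsFreeInv (weightShift a) (vanishingBelow (ZMod 3) t) := by
  refine ⟨vanishingBelow_mem_invtSubmodule a t, fun f hf hker => ?_⟩
  have hf2 := mem_vanishingBelow_add_two_of_weightShift_eq_zero ht hf hker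
  -- Only coefficients at `k + 2 ≡ a` survive in `f`, and there the two weights of `D²` are
  -- `1` and `2`, whose product is `-1`.
  refine ⟨-f.divX.divX, fun n hn => ?_, ?_⟩
  · simp [coeff_divX, hf2 (n + 2) (by omega)]
  · ext k
    rcases k with _ | _ | k
    · simp [hf2 0 (by omega)]
    · simp [hf2 1 (by omega)]
    · have hk := congrArg (coeff · (k + 3)) hker
      simp only [coeff_weightShift_succ, coeff_zero] at hk
      have h : ∀ x c : ZMod 3, (x - 2) * c = 0 → -((x - 1) * (x * c)) = c := by decide
      have := h (a - k) (f.coeff (k + 2)) (by push_cast at hk; linear_combination hk)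
      simp only [coeff_weightShift_succ, coeff_neg, coeff_divX]
      push_cast at this ⊢
      linear_combination this

end Polynomial

theorem IsFreeInv.prodMap {V V' : Type*} [AddCommGroup V] [Module (ZMod 3) V]
    [AddCommGroup V'] [Module (ZMod 3) V'] {D : V →ₗ[ZMod 3] V} {D' : V' →ₗ[ZMod 3] V'}
    {W : Submodule (ZMod 3) V} {W' : Submodule (ZMod 3) V'}
    (h : IsFreeInv D W) (h' : IsFreeInv D' W') : IsFreeInv (D.prodMap D') (W.prod W') := by
  refine ⟨fun w hw => ⟨h.1 _ hw.1, h'.1 _ hw.2⟩, fun w hw hker => ?_⟩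
  obtain ⟨u, hu, hDu⟩ := h.2 w.1 hw.1 (congrArg Prod.fst hker)
  obtain ⟨u', hu', hDu'⟩ := h'.2 w.2 hw.2 (congrArg Prod.snd hker)
  exact ⟨(u, u'), ⟨hu, hu'⟩, Prod.ext hDu hDu'⟩

-- `D17 ε` is `(weightShift ε).prodMap (weightShift (1 + ε))` by definition.
theorem isFreeInv_D17 {ε : ZMod 3} {t t' : ℕ} (ht : (t : ZMod 3) = ε + 1)
    (ht' : (t' : ZMod 3) = 1 + ε + 1) :
    IsFreeInv (D17 ε) ((vanishingBelow (ZMod 3) t).prod (vanishingBelow (ZMod 3) t')) :=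
  (isFreeInv_weightShift ht).prodMap (isFreeInv_weightShift ht')

/-- `D = P + ε r` satisfies `D³ = 0` on `H = F₃[r] ⊕ R F₃[r]`, and the non-free part of `H`
as an `F₃[D]/(D³)`-module is: for `ε = 1`, `span{1, r}`; for `ε = −1`, `span{R}`; for `ε = 0`,
`span{1} ⊕ span{R, Rr}`.  (Here `1 = (1,0)`, `r = (X,0)`, `R = (0,1)`, `Rr = (0,X)`.) -/
theorem stmt17 :
    (∀ ε : ZMod 3, ∀ v, D17 ε (D17 ε (D17 ε v)) = 0) ∧
    (∃ W, IsFreeInv (D17 0) W ∧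
      (∀ w ∈ Submodule.span (ZMod 3)
          ({((1 : Polynomial (ZMod 3)), (0 : Polynomial (ZMod 3)))} :
            Set (Polynomial (ZMod 3) × Polynomial (ZMod 3))),
        D17 0 w ∈ Submodule.span (ZMod 3)
          ({((1 : Polynomial (ZMod 3)), (0 : Polynomial (ZMod 3)))} :
            Set (Polynomial (ZMod 3) × Polynomial (ZMod 3)))) ∧
      (∀ w ∈ Submodule.span (ZMod 3)
          ({((0 : Polynomial (ZMod 3)), (1 : Polynomial (ZMod 3))),
            ((0 : Polynomial (ZMod 3)), X)} :
            Set (Polynomial (ZMod 3) × Polynomial (ZMod 3))),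
        D17 0 w ∈ Submodule.span (ZMod 3)
          ({((0 : Polynomial (ZMod 3)), (1 : Polynomial (ZMod 3))),
            ((0 : Polynomial (ZMod 3)), X)} :
            Set (Polynomial (ZMod 3) × Polynomial (ZMod 3)))) ∧
      Submodule.span (ZMod 3)
          ({((1 : Polynomial (ZMod 3)), (0 : Polynomial (ZMod 3)))} :
            Set (Polynomial (ZMod 3) × Polynomial (ZMod 3))) ⊓
        Submodule.span (ZMod 3)
          ({((0 : Polynomial (ZMod 3)), (1 : Polynomial (ZMod 3))),
            ((0 : Polynomial (ZMod 3)), X)} :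
            Set (Polynomial (ZMod 3) × Polynomial (ZMod 3))) = ⊥ ∧
      W ⊓ (Submodule.span (ZMod 3)
          ({((1 : Polynomial (ZMod 3)), (0 : Polynomial (ZMod 3)))} :
            Set (Polynomial (ZMod 3) × Polynomial (ZMod 3))) ⊔
        Submodule.span (ZMod 3)
          ({((0 : Polynomial (ZMod 3)), (1 : Polynomial (ZMod 3))),
            ((0 : Polynomial (ZMod 3)), X)} :
            Set (Polynomial (ZMod 3) × Polynomial (ZMod 3)))) = ⊥ ∧
      W ⊔ (Submodule.span (ZMod 3)
          ({((1 : Polynomial (ZMod 3)), (0 : Polynomial (ZMod 3)))} :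
            Set (Polynomial (ZMod 3) × Polynomial (ZMod 3))) ⊔
        Submodule.span (ZMod 3)
          ({((0 : Polynomial (ZMod 3)), (1 : Polynomial (ZMod 3))),
            ((0 : Polynomial (ZMod 3)), X)} :
            Set (Polynomial (ZMod 3) × Polynomial (ZMod 3)))) = ⊤) ∧
    (∃ W, IsFreeInv (D17 1) W ∧
      (∀ w ∈ Submodule.span (ZMod 3)
          ({((1 : Polynomial (ZMod 3)), (0 : Polynomial (ZMod 3))),
            (X, (0 : Polynomial (ZMod 3)))} :
            Set (Polynomial (ZMod 3) × Polynomial (ZMod 3))),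
        D17 1 w ∈ Submodule.span (ZMod 3)
          ({((1 : Polynomial (ZMod 3)), (0 : Polynomial (ZMod 3))),
            (X, (0 : Polynomial (ZMod 3)))} :
            Set (Polynomial (ZMod 3) × Polynomial (ZMod 3)))) ∧
      W ⊓ Submodule.span (ZMod 3)
          ({((1 : Polynomial (ZMod 3)), (0 : Polynomial (ZMod 3))),
            (X, (0 : Polynomial (ZMod 3)))} :
            Set (Polynomial (ZMod 3) × Polynomial (ZMod 3))) = ⊥ ∧
      W ⊔ Submodule.span (ZMod 3)
          ({((1 : Polynomial (ZMod 3)), (0 : Polynomial (ZMod 3))),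
            (X, (0 : Polynomial (ZMod 3)))} :
            Set (Polynomial (ZMod 3) × Polynomial (ZMod 3))) = ⊤) ∧
    (∃ W, IsFreeInv (D17 (-1)) W ∧
      (∀ w ∈ Submodule.span (ZMod 3)
          ({((0 : Polynomial (ZMod 3)), (1 : Polynomial (ZMod 3)))} :
            Set (Polynomial (ZMod 3) × Polynomial (ZMod 3))),
        D17 (-1) w ∈ Submodule.span (ZMod 3)
          ({((0 : Polynomial (ZMod 3)), (1 : Polynomial (ZMod 3)))} :
            Set (Polynomial (ZMod 3) × Polynomial (ZMod 3)))) ∧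
      W ⊓ Submodule.span (ZMod 3)
          ({((0 : Polynomial (ZMod 3)), (1 : Polynomial (ZMod 3)))} :
            Set (Polynomial (ZMod 3) × Polynomial (ZMod 3))) = ⊥ ∧
      W ⊔ Submodule.span (ZMod 3)
          ({((0 : Polynomial (ZMod 3)), (1 : Polynomial (ZMod 3)))} :
            Set (Polynomial (ZMod 3) × Polynomial (ZMod 3))) = ⊤) := by
  simp only [span_inl_one, span_inl_one_X, span_inr_one, span_inr_one_X]
  refine ⟨fun ε v => Prod.ext (weightShift_cube _ _) (weightShift_cube _ _), ?_, ?_, ?_⟩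
  · have hc := isCompl_vanishingBelow_prod_degreeLT_prod (R := ZMod 3) 1 2
    refine ⟨_, isFreeInv_D17 (t := 1) (t' := 2) (by decide) (by decide),
      Module.End.prod_mem_invtSubmodule_prodMap (degreeLT_mem_invtSubmodule (by decide))
        (Module.End.invtSubmodule.bot_mem _),
      Module.End.prod_mem_invtSubmodule_prodMap (Module.End.invtSubmodule.bot_mem _)
        (degreeLT_mem_invtSubmodule (by decide)), ?_, ?_, ?_⟩
    · simp [Submodule.prod_inf_prod]
    · simpa [Submodule.prod_sup_prod] using hc.inf_eq_bot
    · simpa [Submodule.prod_sup_prod] using hc.sup_eq_top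
  · have hc := isCompl_vanishingBelow_prod_degreeLT_prod (R := ZMod 3) 2 0
    rw [degreeLT_zero] at hc
    exact ⟨_, isFreeInv_D17 (t := 2) (t' := 0) (by decide) (by decide),
      Module.End.prod_mem_invtSubmodule_prodMap (degreeLT_mem_invtSubmodule (by decide))
        (Module.End.invtSubmodule.bot_mem _), hc.inf_eq_bot, hc.sup_eq_top⟩
  · have hc := isCompl_vanishingBelow_prod_degreeLT_prod (R := ZMod 3) 0 1
    rw [degreeLT_zero] at hc
    exact ⟨_, isFreeInv_D17 (t := 0) (t' := 1) (by decide) (by decide),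
      Module.End.prod_mem_invtSubmodule_prodMap (Module.End.invtSubmodule.bot_mem _)
        (degreeLT_mem_invtSubmodule (by decide)), hc.inf_eq_bot, hc.sup_eq_top⟩
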